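/- arXiv:1907.10832 — 2 statements merged into one kernel-verified Lean document; each statement's English description precedes it below -/
import Mathlib

section
/- Let (V₁,V₂,V) be a tetrablock isometry on a complex Hilbert space K, i.e. a triple of pairwise commuting bounded operators with V an isometry, ‖V₂‖ ≤ 1, and V₁ = V₂*V. Then there exist a complex Hilbert space K̃, an isometric linear embedding ι : K → K̃, and pairwise commuting normal operators U₁, U₂, U on K̃ with U unitary, ‖U₂‖ ≤ 1, and U₁ = U₂*U, such that U₁ ι = ι V₁, U₂ ι = ι V₂, and U ι = ι V (i.e. (U₁,U₂,U) is a tetrablock unitary extending (V₁,V₂,V)). -/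
/- Common definitions: the tetrablock, tetrablock contractions, defect operators and
defect spaces, fundamental operators, tetrablock isometries and tetrablock-isometric lifts. -/

noncomputable section

open ContinuousLinearMap

universe u

/-- The tetrablock domain `𝔼 ⊆ ℂ³`: points `(x₁,x₂,x₃)` of the form
`(a₁₁, a₂₂, det A)` for some `2×2` complex matrix `A` of operator norm `< 1`. -/
def tetrablock : Set (Fin 3 → ℂ) :=
  {x | ∃ A : Matrix (Fin 2) (Fin 2) ℂ,
    ‖Matrix.toEuclideanCLM (𝕜 := ℂ) A‖ < 1 ∧ x 0 = A 0 0 ∧ x 1 = A 1 1 ∧ x 2 = A.det}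

variable {H : Type u} [NormedAddCommGroup H] [InnerProductSpace ℂ H] [CompleteSpace H]

/-- Evaluation `p(T₁,T₂,T)` of a three-variable polynomial at a (commuting) operator
triple: substitute `T₁,T₂,T` monomial-wise (order is immaterial for commuting triples). -/
def polyEval (T₁ T₂ T : H →L[ℂ] H) (p : MvPolynomial (Fin 3) ℂ) : H →L[ℂ] H :=
  p.support.sum fun m => p.coeff m • (T₁ ^ m 0 * T₂ ^ m 1 * T ^ m 2)

/-- A tetrablock contraction: a commuting triple for which the closed tetrablock is a
spectral set. -/
def IsTetrablockContraction (T₁ T₂ T : H →L[ℂ] H) : Prop :=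
  Commute T₁ T₂ ∧ Commute T₁ T ∧ Commute T₂ T ∧
  ∀ p : MvPolynomial (Fin 3) ℂ,
    ‖polyEval T₁ T₂ T p‖ ≤
      sSup {y : ℝ | ∃ x ∈ closure tetrablock, y = ‖MvPolynomial.eval x p‖}

/-- The defect operator `D_T = (I - T*T)^{1/2}` of a contraction `T`. -/
def defect (T : H →L[ℂ] H) : H →L[ℂ] H := CFC.sqrt (1 - adjoint T * T)

/-- The defect space `𝒟_T`, the closure of the range of `D_T`. -/
def defectSpace (T : H →L[ℂ] H) : Submodule ℂ H :=
  (LinearMap.range (defect T : H →ₗ[ℂ] H)).topologicalClosure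

lemma defect_mem (T : H →L[ℂ] H) (h : H) : defect T h ∈ defectSpace T :=
  Submodule.le_topologicalClosure _ ⟨h, rfl⟩

/-- The defect operator `D_T`, viewed as a map from `H` into the defect space `𝒟_T`. -/
def defectTo (T : H →L[ℂ] H) : H →L[ℂ] defectSpace T :=
  (defect T).codRestrict _ (defect_mem T)

instance (T : H →L[ℂ] H) : CompleteSpace (defectSpace T) :=
  IsClosed.completeSpace_coe (hs := Submodule.isClosed_topologicalClosure _)

/-- `F₁, F₂` are fundamental operators for `(T₁,T₂,T)`:
`T₁ - T₂* T = D_T F₁ D_T` and `T₂ - T₁* T = D_T F₂ D_T`. -/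
def AreFundamentalOps (T₁ T₂ T : H →L[ℂ] H)
    (F₁ F₂ : defectSpace T →L[ℂ] defectSpace T) : Prop :=
  T₁ - adjoint T₂ * T = (defectSpace T).subtypeL ∘L F₁ ∘L defectTo T ∧
  T₂ - adjoint T₁ * T = (defectSpace T).subtypeL ∘L F₂ ∘L defectTo T

/-- A tetrablock isometry: a commuting triple `(V₁,V₂,V)` with `V` an isometry,
`‖V₂‖ ≤ 1` and `V₁ = V₂* V`. -/
def IsTetrablockIsometry {K : Type u} [NormedAddCommGroup K] [InnerProductSpace ℂ K]
    [CompleteSpace K] (V₁ V₂ V : K →L[ℂ] K) : Prop :=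
  Commute V₁ V₂ ∧ Commute V₁ V ∧ Commute V₂ V ∧
    adjoint V * V = 1 ∧ ‖V₂‖ ≤ 1 ∧ V₁ = adjoint V₂ * V

/-- `(T₁,T₂,T)` has a tetrablock-isometric lift: a tetrablock isometry `(V₁,V₂,V)` on a
space `K ⊇ H` whose adjoints extend the adjoints of `T₁,T₂,T`. -/
def HasTetrablockIsometricLift (T₁ T₂ T : H →L[ℂ] H) : Prop :=
  ∃ (K : Type u) (_ : NormedAddCommGroup K) (_ : InnerProductSpace ℂ K) (_ : CompleteSpace K)
    (ι : H →ₗᵢ[ℂ] K) (V₁ V₂ V : K →L[ℂ] K),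
      IsTetrablockIsometry V₁ V₂ V ∧
      (∀ h : H, adjoint V₁ (ι h) = ι (adjoint T₁ h)) ∧
      (∀ h : H, adjoint V₂ (ι h) = ι (adjoint T₂ h)) ∧
      (∀ h : H, adjoint V (ι h) = ι (adjoint T h))


/-
The isometry `V` has a unitary extension on the space of bounded sequences `(f n)` in `K` with
`V* f (n + 1) = f n`, normed by `sup ‖f n‖ = lim ‖f n‖`: this norm satisfies the parallelogram
law, `k ↦ (Vⁿ k)ₙ` embeds `K` isometrically, and the left shift `U` is unitary and extends `V`.
An operator commuting with `V*` acts coordinatewise on such sequences and commutes with `U`, so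
every `T` commuting with `V` extends to `T̃ := (T* applied coordinatewise)*`, which commutes
with `U`; moreover `‖T̃‖ ≤ ‖T‖` and `T ↦ T̃` preserves commutation. Put `U₂ := Ṽ₂`. Since
`f (n + 1) - V (f n) → 0` for every `f`, the relation `V₂* V = V₁` lifts to `U₂* U = Ṽ₁`, which
therefore commutes with `U₂`; as `U` is unitary and commutes with `U₂`, this forces `U₂` to be
normal, and then `U₁ := U₂* U` is normal too.
-/

open Filter Topology
open scoped ENNReal ComplexInnerProductSpace

section TetrablockUnitary

variable {A : Type*} [CStarAlgebra A]

lemma Commute.isStarNormal_mul {a b : A} [ha : IsStarNormal a] [hb : IsStarNormal b]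
    (h : Commute a b) : IsStarNormal (a * b) := by
  have h₁ : Commute (star a) b := ha.commute_star_left h
  have h₂ : Commute a (star b) := hb.commute_star_right h
  rw [isStarNormal_iff, commute_iff_eq, star_mul]
  calc star b * star a * (a * b) = star b * (star a * a * b) := by simp only [mul_assoc]
    _ = star b * b * (star a * a) := by rw [(h₁.mul_left h).eq, mul_assoc]
    _ = b * star b * (a * star a) := by rw [star_comm_self' b, star_comm_self' a]
    _ = a * (b * star b) * star a := by rw [(h.mul_right h₂).eq]; simp only [mul_assoc]
    _ = a * b * (star b * star a) := by simp only [mul_assoc]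

lemma isStarNormal_of_commute_star_mul {a u : A} (hu : u ∈ unitary A) (hau : Commute a u)
    (h : Commute (star a * u) a) : IsStarNormal a := by
  rw [isStarNormal_iff, commute_iff_eq]
  calc star a * a = star a * a * u * star u := by
        rw [mul_assoc _ u, Unitary.mul_star_self_of_mem hu, mul_one]
    _ = a * (star a * u) * star u := by rw [mul_assoc (star a), hau.eq, ← mul_assoc, h.eq]
    _ = a * star a := by rw [mul_assoc, mul_assoc, Unitary.mul_star_self_of_mem hu, mul_one]

def IsTetrablockUnitary (U₁ U₂ U : A) : Prop :=
  Commute U₁ U₂ ∧ Commute U₁ U ∧ Commute U₂ U ∧ IsStarNormal U₁ ∧ IsStarNormal U₂ ∧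
    IsStarNormal U ∧ U ∈ unitary A ∧ ‖U₂‖ ≤ 1 ∧ U₁ = star U₂ * U

lemma isTetrablockUnitary_star_mul {a u : A} (hu : u ∈ unitary A) (hau : Commute a u)
    (h : Commute (star a * u) a) (ha : ‖a‖ ≤ 1) : IsTetrablockUnitary (star a * u) a u := by
  have hu' : IsStarNormal u := isStarNormal_of_mem_unitary hu
  have ha' : IsStarNormal a := isStarNormal_of_commute_star_mul hu hau h
  have hsau : Commute (star a) u := ha'.commute_star_left hau
  exact ⟨h, hsau.mul_left (Commute.refl u), hau, hsau.isStarNormal_mul, ha', hu', hu, ha, rfl⟩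

end TetrablockUnitary

section

variable {K : Type*} [NormedAddCommGroup K] [InnerProductSpace ℂ K] [CompleteSpace K]
  {V : K →L[ℂ] K}

lemma ContinuousLinearMap.norm_adjoint_apply_le_of_norm_le_one (hV : ‖V‖ ≤ 1) (x : K) :
    ‖adjoint V x‖ ≤ ‖x‖ :=
  (le_opNorm _ x).trans <| mul_le_of_le_one_left (norm_nonneg x) <|
    (adjoint.norm_map V).trans_le hV

lemma ContinuousLinearMap.adjoint_apply_apply_of_adjoint_mul_self (hV : adjoint V * V = 1)
    (x : K) : adjoint V (V x) = x :=
  congr($hV x)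

lemma ContinuousLinearMap.norm_map_of_adjoint_mul_self (hV : adjoint V * V = 1) (x : K) :
    ‖V x‖ = ‖x‖ :=
  V.norm_map_iff_adjoint_comp_self.mpr hV x

lemma ContinuousLinearMap.norm_le_one_of_adjoint_mul_self (hV : adjoint V * V = 1) :
    ‖V‖ ≤ 1 :=
  opNorm_le_bound _ zero_le_one fun x => by rw [norm_map_of_adjoint_mul_self hV, one_mul]

lemma ContinuousLinearMap.norm_pow_apply_of_adjoint_mul_self (hV : adjoint V * V = 1)
    (n : ℕ) (x : K) : ‖(V ^ n) x‖ = ‖x‖ := by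
  induction n with
  | zero => rfl
  | succ n ih => rw [pow_succ', mul_apply_eq_comp, norm_map_of_adjoint_mul_self hV, ih]

end

section

variable {K : Type*} [NormedAddCommGroup K] [InnerProductSpace ℂ K] [CompleteSpace K]
  {V : K →L[ℂ] K}

/- Working inside `ℓ^∞(ℕ, K)` provides the norm `sup ‖f n‖` and, the defining relations being
closed, completeness. -/
variable (V) in
def unitaryExtensionSubmodule : Submodule ℂ (lp (fun _ : ℕ ↦ K) ∞) where
  carrier := {f | ∀ n, adjoint V (f (n + 1)) = f n}
  add_mem' hf hg n := by simp [hf n, hg n]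
  zero_mem' n := by simp
  smul_mem' c f hf n := by simp [hf n]

variable (V) in
abbrev UnitaryExtension : Type _ := unitaryExtensionSubmodule V

namespace UnitaryExtension

instance : FunLike (UnitaryExtension V) ℕ K where
  coe f := (f : lp (fun _ : ℕ ↦ K) ∞)
  coe_injective _ _ h := Subtype.ext (lp.ext h)

@[ext]
lemma ext {f g : UnitaryExtension V} (h : ∀ n, f n = g n) : f = g := DFunLike.ext _ _ h

@[simp] lemma add_apply (f g : UnitaryExtension V) (n : ℕ) : (f + g) n = f n + g n := rfl
@[simp] lemma sub_apply (f g : UnitaryExtension V) (n : ℕ) : (f - g) n = f n - g n := rfl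
@[simp] lemma smul_apply (c : ℂ) (f : UnitaryExtension V) (n : ℕ) : (c • f) n = c • f n := rfl

lemma adjoint_apply_succ (f : UnitaryExtension V) (n : ℕ) : adjoint V (f (n + 1)) = f n :=
  f.2 n

lemma norm_apply_le (f : UnitaryExtension V) (n : ℕ) : ‖f n‖ ≤ ‖f‖ :=
  lp.norm_apply_le_norm ENNReal.top_ne_zero f.1 n

instance : CompleteSpace (UnitaryExtension V) := by
  refine IsClosed.completeSpace_coe (hs := ?_)
  change IsClosed {f : lp (fun _ : ℕ ↦ K) ∞ |
    ∀ n, adjoint V (lp.evalCLM ℂ _ ∞ (n + 1) f) = lp.evalCLM ℂ _ ∞ n f}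
  rw [Set.ofPred_forall]
  exact isClosed_iInter fun n => isClosed_eq (by fun_prop) (by fun_prop)

def mk (g : ℕ → K) (hg : ∀ n, adjoint V (g (n + 1)) = g n) (C : ℝ) (hC : ∀ n, ‖g n‖ ≤ C) :
    UnitaryExtension V :=
  ⟨⟨g, memℓp_infty ⟨C, Set.forall_mem_range.2 hC⟩⟩, hg⟩

@[simp] lemma mk_apply (g : ℕ → K) (hg : ∀ n, adjoint V (g (n + 1)) = g n) (C : ℝ)
    (hC : ∀ n, ‖g n‖ ≤ C) (n : ℕ) : mk g hg C hC n = g n := rfl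

lemma norm_mk_le (g : ℕ → K) (hg : ∀ n, adjoint V (g (n + 1)) = g n) (C : ℝ)
    (hC : ∀ n, ‖g n‖ ≤ C) : ‖mk g hg C hC‖ ≤ C :=
  lp.norm_le_of_forall_le' C hC

lemma norm_apply_apply_le (B : K →L[ℂ] K) (f : UnitaryExtension V) (n : ℕ) :
    ‖B (f n)‖ ≤ ‖B‖ * ‖f‖ :=
  (le_opNorm B _).trans <| by gcongr; exact norm_apply_le f n

def map (B : K →L[ℂ] K) (hB : Commute B (adjoint V)) :
    UnitaryExtension V →L[ℂ] UnitaryExtension V :=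
  LinearMap.mkContinuous
    { toFun f := mk (fun n => B (f n))
        (fun n => by rw [← mul_apply_eq_comp, ← hB.eq, mul_apply_eq_comp, adjoint_apply_succ])
        (‖B‖ * ‖f‖) (norm_apply_apply_le B f)
      map_add' _ _ := by ext; simp
      map_smul' _ _ := by ext; simp }
    ‖B‖ fun f => norm_mk_le _ _ _ (norm_apply_apply_le B f)

lemma map_apply (B : K →L[ℂ] K) (hB : Commute B (adjoint V)) (f : UnitaryExtension V)
    (n : ℕ) : map B hB f n = B (f n) := rfl

lemma norm_map_le (B : K →L[ℂ] K) (hB : Commute B (adjoint V)) : ‖map B hB‖ ≤ ‖B‖ :=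
  LinearMap.mkContinuous_norm_le _ (norm_nonneg B) _

lemma commute_map {B C : K →L[ℂ] K} (hB : Commute B (adjoint V)) (hC : Commute C (adjoint V))
    (h : Commute B C) : Commute (map B hB) (map C hC) := by
  ext f n
  exact congr($h.eq (f n))

section Contraction

variable [Fact (‖V‖ ≤ 1)]

lemma monotone_norm_apply (f : UnitaryExtension V) : Monotone (‖f ·‖) :=
  monotone_nat_of_le_succ fun n => by
    rw [← adjoint_apply_succ f n]
    exact norm_adjoint_apply_le_of_norm_le_one Fact.out _

lemma tendsto_norm_apply (f : UnitaryExtension V) : Tendsto (‖f ·‖) atTop (𝓝 ‖f‖) :=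
  tendsto_atTop_isLUB (monotone_norm_apply f) (lp.isLUB_norm f.1)

lemma parallelogram_law (f g : UnitaryExtension V) :
    ‖f + g‖ * ‖f + g‖ + ‖f - g‖ * ‖f - g‖ = 2 * (‖f‖ * ‖f‖ + ‖g‖ * ‖g‖) := by
  have lim := tendsto_norm_apply (V := V)
  refine tendsto_nhds_unique
    (((lim (f + g)).mul (lim (f + g))).add ((lim (f - g)).mul (lim (f - g)))) ?_
  simp only [add_apply, sub_apply, parallelogram_law_with_norm_mul ℂ]
  exact (((lim f).mul (lim f)).add ((lim g).mul (lim g))).const_mul 2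

instance : InnerProductSpace ℂ (UnitaryExtension V) :=
  @InnerProductSpace.ofNorm ℂ _ (UnitaryExtension V) _ _ (parallelogram_law (V := V))

lemma tendsto_inner_apply (f g : UnitaryExtension V) :
    Tendsto (fun n => ⟪f n, g n⟫) atTop (𝓝 ⟪f, g⟫) := by
  have lim (h : UnitaryExtension V) :
      Tendsto (fun n => (‖h n‖ : ℂ) ^ 2) atTop (𝓝 ((‖h‖ : ℂ) ^ 2)) :=
    ((Complex.continuous_ofReal.tendsto _).comp (tendsto_norm_apply h)).pow 2
  have polarization := (((lim (f + g)).sub (lim (f - g))).add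
    (((lim (f - (RCLike.I : ℂ) • g)).sub (lim (f + (RCLike.I : ℂ) • g))).mul_const
      (RCLike.I : ℂ))).div_const 4
  rw [show ⟪f, g⟫ = _ from inner_eq_sum_norm_sq_div_four f g]
  exact polarization.congr fun n => (inner_eq_sum_norm_sq_div_four (f n) (g n)).symm

variable (V) in
def shift : UnitaryExtension V ≃ₗᵢ[ℂ] UnitaryExtension V where
  toFun f := mk (fun n => f (n + 1)) (fun n => adjoint_apply_succ f (n + 1)) ‖f‖
    fun n => norm_apply_le f (n + 1)
  invFun f := mk (fun n => Nat.casesOn n (adjoint V (f 0)) f)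
    (by rintro (_ | n); exacts [rfl, adjoint_apply_succ f n]) ‖f‖
    (by rintro (_ | n); exacts [(norm_adjoint_apply_le_of_norm_le_one Fact.out _).trans (norm_apply_le f 0),
      norm_apply_le f n])
  map_add' _ _ := rfl
  map_smul' _ _ := rfl
  left_inv f := by ext (_ | n); exacts [adjoint_apply_succ f 0, rfl]
  right_inv _ := rfl
  norm_map' f := tendsto_nhds_unique (tendsto_norm_apply _)
    ((tendsto_add_atTop_iff_nat 1).2 (tendsto_norm_apply f))

variable (V) in
def shiftUnitary : unitary (UnitaryExtension V →L[ℂ] UnitaryExtension V) :=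
  Unitary.linearIsometryEquiv.symm (shift V)

def embedding (hV : adjoint V * V = 1) : K →ₗᵢ[ℂ] UnitaryExtension V where
  toFun k := mk (fun n => (V ^ n) k)
    (fun n => by rw [pow_succ', mul_apply_eq_comp, adjoint_apply_apply_of_adjoint_mul_self hV])
    ‖k‖ fun n => (norm_pow_apply_of_adjoint_mul_self hV n k).le
  map_add' _ _ := by ext; simp
  map_smul' _ _ := by ext; simp
  norm_map' k := tendsto_nhds_unique (tendsto_norm_apply _) <| by
    simp only [mk_apply, norm_pow_apply_of_adjoint_mul_self hV, LinearMap.coe_mk, AddHom.coe_mk]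
    exact tendsto_const_nhds

lemma embedding_apply (hV : adjoint V * V = 1) (k : K) (n : ℕ) :
    embedding hV k n = (V ^ n) k := rfl

lemma shiftUnitary_embedding (hV : adjoint V * V = 1) (k : K) :
    (shiftUnitary V : UnitaryExtension V →L[ℂ] UnitaryExtension V) (embedding hV k) =
      embedding hV (V k) := by
  ext n
  rw [embedding_apply, ← mul_apply_eq_comp, ← pow_succ]
  rfl

lemma inner_embedding_left (hV : adjoint V * V = 1) (k : K) (f : UnitaryExtension V) :
    ⟪embedding hV k, f⟫ = ⟪k, f 0⟫ := by
  have h (n : ℕ) : ⟪(V ^ n) k, f n⟫ = ⟪k, f 0⟫ := by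
    induction n with
    | zero => rfl
    | succ n ih =>
      rw [pow_succ', mul_apply_eq_comp, ← adjoint_inner_right, adjoint_apply_succ, ih]
  exact tendsto_nhds_unique (tendsto_inner_apply _ f)
    (tendsto_const_nhds.congr fun n => (h n).symm)

lemma commute_map_shiftUnitary (B : K →L[ℂ] K) (hB : Commute B (adjoint V)) :
    Commute (map B hB) (shiftUnitary V) := by
  ext f n
  rfl

def lift (T : K →L[ℂ] K) (hT : Commute T V) : UnitaryExtension V →L[ℂ] UnitaryExtension V :=
  adjoint (map (adjoint T) hT.star_star)

lemma lift_embedding (hV : adjoint V * V = 1) {T : K →L[ℂ] K} (hT : Commute T V) (k : K) :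
    lift T hT (embedding hV k) = embedding hV (T k) :=
  ext_inner_right ℂ fun f => by
    rw [lift, adjoint_inner_left, inner_embedding_left, inner_embedding_left, map_apply,
      adjoint_inner_right]

lemma norm_lift_le {T : K →L[ℂ] K} (hT : Commute T V) : ‖lift T hT‖ ≤ ‖T‖ := by
  rw [lift, adjoint.norm_map]
  exact (norm_map_le _ _).trans (adjoint.norm_map T).le

lemma commute_lift_shiftUnitary {T : K →L[ℂ] K} (hT : Commute T V) :
    Commute (lift T hT) (shiftUnitary V) := by
  have := ((Unitary.coe_isStarNormal (shiftUnitary V)).commute_star_right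
    (A := UnitaryExtension V →L[ℂ] UnitaryExtension V)
    (commute_map_shiftUnitary _ hT.star_star)).star_star
  rw [star_star] at this
  exact this

lemma commute_lift {T S : K →L[ℂ] K} (hT : Commute T V) (hS : Commute S V) (h : Commute T S) :
    Commute (lift T hT) (lift S hS) :=
  (commute_map (V := V) _ _ h.star_star).star_star

lemma tendsto_norm_apply_succ_sub (hV : adjoint V * V = 1) (f : UnitaryExtension V) :
    Tendsto (fun n => ‖f (n + 1) - V (f n)‖) atTop (𝓝 0) := by
  -- `V V*` is the orthogonal projection onto the range of `V` and `f n = V* f (n + 1)`.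
  have h (n : ℕ) : ‖f (n + 1) - V (f n)‖ = √(‖f (n + 1)‖ ^ 2 - ‖f n‖ ^ 2) := by
    rw [← Real.sqrt_sq (norm_nonneg _), @norm_sub_sq ℂ, ← adjoint_apply_succ f n,
      ← adjoint_inner_left, inner_self_eq_norm_sq, norm_map_of_adjoint_mul_self hV]
    ring_nf
  have lim := (tendsto_norm_apply f).pow 2
  simpa [h] using ((((tendsto_add_atTop_iff_nat 1).2 lim).sub lim).sqrt)

lemma adjoint_lift_mul_shiftUnitary (hV : adjoint V * V = 1) {T S : K →L[ℂ] K}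
    (hT : Commute T V) (hS : Commute S V) (hTS : adjoint T * V = S) :
    adjoint (lift T hT) * shiftUnitary V = lift S hS := by
  rw [lift, lift, adjoint_adjoint, eq_adjoint_iff]
  intro f g
  have split (n : ℕ) : ⟪adjoint T (f (n + 1)), g n⟫ =
      ⟪f n, adjoint S (g n)⟫ + ⟪adjoint T (f (n + 1) - V (f n)), g n⟫ := by
    rw [adjoint_inner_right, ← hTS, mul_apply_eq_comp, map_sub, inner_sub_left, add_sub_cancel]
  have error : Tendsto (fun n => ⟪adjoint T (f (n + 1) - V (f n)), g n⟫) atTop (𝓝 0) := by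
    refine squeeze_zero_norm (fun n => (norm_inner_le_norm _ _).trans ?_)
      (by simpa only [mul_zero, zero_mul] using
        ((tendsto_norm_apply_succ_sub hV f).const_mul ‖adjoint T‖).mul_const ‖g‖)
    exact mul_le_mul (le_opNorm _ _) (norm_apply_le g n) (norm_nonneg _) (by positivity)
  refine tendsto_nhds_unique (tendsto_inner_apply _ g) ?_
  have := ((tendsto_inner_apply f (map (adjoint S) hS.star_star g)).add error).congr
    fun n => (split n).symm
  rw [add_zero] at this
  exact this

end Contraction

end UnitaryExtension

end

open UnitaryExtension

/-- every tetrablock isometry extends to a tetrablock unitary. -/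
theorem tetrablockIsometry_extends_to_tetrablockUnitary
    {K : Type u} [NormedAddCommGroup K] [InnerProductSpace ℂ K] [CompleteSpace K]
    (V₁ V₂ V : K →L[ℂ] K) (hV : IsTetrablockIsometry V₁ V₂ V) :
    ∃ (K' : Type u) (_ : NormedAddCommGroup K') (_ : InnerProductSpace ℂ K')
      (_ : CompleteSpace K') (ι : K →ₗᵢ[ℂ] K') (U₁ U₂ U : K' →L[ℂ] K'),
        Commute U₁ U₂ ∧ Commute U₁ U ∧ Commute U₂ U ∧
        IsStarNormal U₁ ∧ IsStarNormal U₂ ∧ IsStarNormal U ∧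
        adjoint U * U = 1 ∧ U * adjoint U = 1 ∧
        ‖U₂‖ ≤ 1 ∧ U₁ = adjoint U₂ * U ∧
        (∀ k : K, U₁ (ι k) = ι (V₁ k)) ∧
        (∀ k : K, U₂ (ι k) = ι (V₂ k)) ∧
        (∀ k : K, U (ι k) = ι (V k)) := by
  obtain ⟨h₁₂, h₁, h₂, hV, hV₂, rfl⟩ := hV
  have : Fact (‖V‖ ≤ 1) := ⟨norm_le_one_of_adjoint_mul_self hV⟩
  have hU₁ : adjoint (lift V₂ h₂) * (shiftUnitary V : UnitaryExtension V →L[ℂ] _) =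
      lift (adjoint V₂ * V) h₁ :=
    adjoint_lift_mul_shiftUnitary hV h₂ h₁ rfl
  have h₁₂' := commute_lift h₁ h₂ h₁₂
  rw [← hU₁] at h₁₂'
  obtain ⟨c₁₂, c₁, c₂, n₁, n₂, n, hU, hU₂, -⟩ :=
    isTetrablockUnitary_star_mul (A := UnitaryExtension V →L[ℂ] UnitaryExtension V)
      (shiftUnitary V).2 (commute_lift_shiftUnitary h₂) h₁₂' ((norm_lift_le h₂).trans hV₂)
  refine ⟨_, _, _, _, embedding hV, _, _, _, c₁₂, c₁, c₂, n₁, n₂, n, hU.1, hU.2, hU₂, rfl,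
    fun k => (DFunLike.congr_fun hU₁ _).trans (lift_embedding hV h₁ k), lift_embedding hV h₂,
    shiftUnitary_embedding hV⟩
end
end

section
/- Let T be a partial isometry (a contraction with T T* T = T) on a complex Hilbert space H, and let T₁, T₂ be contractions on H. Suppose there exist bounded operators F₁, F₂ on the defect space 𝒟_T such that T₁ − T₂*T = D_T F₁ D_T and T₂ − T₁*T = D_T F₂ D_T. Then the kernel of T is invariant under both T₁ and T₂, i.e. T₁(ker T) ⊆ ker T and T₂(ker T) ⊆ ker T. -/
/- Common definitions: the tetrablock, tetrablock contractions, defect operators and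
defect spaces, fundamental operators, tetrablock isometries and tetrablock-isometric lifts. -/

noncomputable section

open ContinuousLinearMap

universe u

variable {H : Type u} [NormedAddCommGroup H] [InnerProductSpace ℂ H] [CompleteSpace H]

/-
For a partial isometry `T`, `T*T` is an orthogonal projection, so `1 - T*T` is one as well and
equals its own square root: `D_T = 1 - T*T`. Hence `T D_T = T - T T* T = 0`, i.e. `𝒟_T ⊆ ker T`.
Applying `T₁ - T₂*T = D_T F₁ D_T` to `x ∈ ker T` gives `T₁ x = D_T F₁ D_T x ∈ 𝒟_T ⊆ ker T`,
and likewise for `T₂`.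
-/

lemma isStarProjection_star_mul_self_of_mul_star_mul_self {R : Type*} [Semigroup R] [StarMul R]
    {a : R} (ha : a * star a * a = a) : IsStarProjection (star a * a) where
  isIdempotentElem := by rw [IsIdempotentElem, mul_assoc, ← mul_assoc a, ha]
  isSelfAdjoint := IsSelfAdjoint.star_mul_self a

section CStarAlgebra

variable {A : Type*} [CStarAlgebra A] [PartialOrder A] [StarOrderedRing A]

lemma IsStarProjection.sqrt_eq_self {p : A} (hp : IsStarProjection p) : CFC.sqrt p = p := by
  conv_lhs => rw [← hp.isIdempotentElem.eq]
  exact CFC.sqrt_mul_self p hp.nonneg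

lemma mul_sqrt_one_sub_star_mul_self_of_mul_star_mul_self {a : A} (ha : a * star a * a = a) :
    a * CFC.sqrt (1 - star a * a) = 0 := by
  rw [(isStarProjection_star_mul_self_of_mul_star_mul_self ha).one_sub.sqrt_eq_self, mul_sub,
    mul_one, ← mul_assoc, ha, sub_self]

end CStarAlgebra

lemma defectSpace_le_ker_of_partialIsometry {T : H →L[ℂ] H} (hT : T * adjoint T * T = T) :
    defectSpace T ≤ LinearMap.ker (T : H →ₗ[ℂ] H) := by
  have hTD : T * defect T = 0 := mul_sqrt_one_sub_star_mul_self_of_mul_star_mul_self hT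
  refine Submodule.topologicalClosure_minimal _ ?_ T.isClosed_ker
  rintro _ ⟨x, rfl⟩
  exact congrArg (· x) hTD

lemma apply_mem_defectSpace_of_sub_mul_eq {S B T : H →L[ℂ] H}
    {F : defectSpace T →L[ℂ] defectSpace T}
    (hF : S - B * T = (defectSpace T).subtypeL ∘L F ∘L defectTo T) {x : H} (hx : T x = 0) :
    S x ∈ defectSpace T := by
  have hSx : S x = F (defectTo T x) := by
    simpa [hx] using congrArg (· x) hF
  exact hSx ▸ (F (defectTo T x)).2

theorem ker_invariant_of_partialIsometry_general
    (T T₁ T₂ : H →L[ℂ] H) (hpi : T * adjoint T * T = T)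
    (F₁ F₂ : defectSpace T →L[ℂ] defectSpace T)
    (hF₁ : T₁ - adjoint T₂ * T = (defectSpace T).subtypeL ∘L F₁ ∘L defectTo T)
    (hF₂ : T₂ - adjoint T₁ * T = (defectSpace T).subtypeL ∘L F₂ ∘L defectTo T) :
    (∀ x ∈ LinearMap.ker (T : H →ₗ[ℂ] H), T₁ x ∈ LinearMap.ker (T : H →ₗ[ℂ] H)) ∧
    (∀ x ∈ LinearMap.ker (T : H →ₗ[ℂ] H), T₂ x ∈ LinearMap.ker (T : H →ₗ[ℂ] H)) := by
  have hle := defectSpace_le_ker_of_partialIsometry hpi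
  exact ⟨fun x hx => hle (apply_mem_defectSpace_of_sub_mul_eq hF₁ hx),
    fun x hx => hle (apply_mem_defectSpace_of_sub_mul_eq hF₂ hx)⟩

/-- if `T` is a partial isometry, `T₁, T₂` are contractions, and operators
`F₁, F₂` on `𝒟_T` satisfy `T₁ - T₂*T = D_T F₁ D_T` and `T₂ - T₁*T = D_T F₂ D_T`,
then `ker T` is invariant under both `T₁` and `T₂`. -/
theorem ker_invariant_of_partialIsometry
    (T T₁ T₂ : H →L[ℂ] H) (hT : ‖T‖ ≤ 1) (hpi : T * adjoint T * T = T)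
    (h1 : ‖T₁‖ ≤ 1) (h2 : ‖T₂‖ ≤ 1)
    (F₁ F₂ : defectSpace T →L[ℂ] defectSpace T)
    (hF₁ : T₁ - adjoint T₂ * T = (defectSpace T).subtypeL ∘L F₁ ∘L defectTo T)
    (hF₂ : T₂ - adjoint T₁ * T = (defectSpace T).subtypeL ∘L F₂ ∘L defectTo T) :
    (∀ x ∈ LinearMap.ker (T : H →ₗ[ℂ] H), T₁ x ∈ LinearMap.ker (T : H →ₗ[ℂ] H)) ∧
    (∀ x ∈ LinearMap.ker (T : H →ₗ[ℂ] H), T₂ x ∈ LinearMap.ker (T : H →ₗ[ℂ] H)) :=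
  ker_invariant_of_partialIsometry_general T T₁ T₂ hpi F₁ F₂ hF₁ hF₂
end
end
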